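/- arXiv:1503.00725 — 2 statements merged into one kernel-verified Lean document; each statement's English description precedes it below -/
import Mathlib

section
/- If L^𝒱 = Δ_ω for a complement 𝒱 and volume ω, then L^𝒱 = Δ_{ω'} for another volume ω' if and only if ω' = c·ω for a nonzero constant c. -/
/-- Suppose `L^𝒱 = Δ_ω`.  Then `L^𝒱 = Δ_{ω'}` for another
volume `ω'` if and only if `ω' = c·ω` for a nonzero constant `c`.
Algebraic model: `R` is the algebra of smooth functions on the (connected)
manifold, `X 1, …, X k` is the horizontal orthonormal frame.  The
bracket-generating (Hörmander) condition enters through its consequence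
(Chow–Rashevskii): a function annihilated by all the `Xᵢ` is constant (`hbg`);
`hind` says the frame is pointwise linearly independent.  Writing `ω' = u • ω`
with `u = e^g` a positive unit (encoded by `Xᵢ u = u · Xᵢ g`), the change-of-volume
formula gives `Δ_{ω'} = Δ_ω + grad g`, i.e. `div_{ω'}(Xᵢ) = d i + Xᵢ g` where
`d i = div_ω(Xᵢ)`.  The claim: `Δ_{ω'} = Δ_ω (= L^𝒱)` iff `u` is a nonzero
constant. -/
theorem volume_unique_up_to_constant
    (R : Type*) [CommRing R] [Algebra ℝ R] [Nontrivial R]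
    (k : ℕ) (X : Fin k → Derivation ℝ R R)
    (hbg : ∀ g : R, (∀ i, (X i) g = 0) → ∃ c : ℝ, g = algebraMap ℝ R c)
    (hind : ∀ r : Fin k → R, (∀ φ : R, ∑ i : Fin k, r i * (X i) φ = 0) → ∀ i, r i = 0)
    (d : Fin k → R) (u : Rˣ) (g : R)
    (hu : ∀ i, (X i) (u : R) = (u : R) * (X i) g) :
    (∀ φ : R, ∑ i : Fin k, ((X i) ((X i) φ) + (d i + (X i) g) * (X i) φ)
        = ∑ i : Fin k, ((X i) ((X i) φ) + d i * (X i) φ))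
      ↔ ∃ c : ℝ, c ≠ 0 ∧ (u : R) = algebraMap ℝ R c := by
  constructor
  · intro h
    have hg : ∀ i, (X i) g = 0 := by
      apply hind
      intro φ
      have := h φ
      have h2 : ∑ i : Fin k, ((X i) ((X i) φ) + (d i + (X i) g) * (X i) φ)
          = ∑ i : Fin k, ((X i) ((X i) φ) + d i * (X i) φ)
            + ∑ i : Fin k, (X i) g * (X i) φ := by
        rw [← Finset.sum_add_distrib]; apply Finset.sum_congr rfl; intros; ring
      rw [h2] at this
      exact add_eq_left.mp this
    have hXu : ∀ i, (X i) (u : R) = 0 := by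
      intro i; rw [hu i, hg i, mul_zero]
    obtain ⟨c, hc⟩ := hbg _ hXu
    refine ⟨c, ?_, hc⟩
    rintro rfl
    simp only [map_zero] at hc
    exact u.ne_zero hc
  · rintro ⟨c, hc, hcu⟩ φ
    have hXu : ∀ i, (X i) (u : R) = 0 := by
      intro i; rw [hcu]; exact Derivation.map_algebraMap _ c
    have hg : ∀ i, (X i) g = 0 := by
      intro i
      have := hu i
      rw [hXu i] at this
      exact (Units.mul_right_eq_zero u).mp this.symm
    apply Finset.sum_congr rfl
    intro i _
    rw [hg i]; ring
end

section
/- Let 𝔤 = 𝔤₁ ⊕ 𝒱₀ be a stratified nilpotent Lie algebra with 𝒱₀ = 𝔤₂ ⊕ … ⊕ 𝔤_m, and let 𝒱_ℓ = {X + ℓ(X) : X ∈ 𝒱₀} for a linear map ℓ : 𝒱₀ → 𝔤₁, with associated projection π_ℓ : 𝔤 → 𝒱_ℓ along 𝔤₁. Then tr(π_ℓ ∘ ad_{X_i} ∘ π_ℓ) = tr(ℓ ∘ ad_{X_i}) for all X_i ∈ 𝔤₁; consequently the complement 𝒱_ℓ satisfies the compatibility condition tr(π_ℓ ∘ ad_{X_i}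 ∘ π_ℓ) = 0 for all i if and only if tr(ℓ ∘ ad_{X_i}) = 0 for all i. -/
/-!
Write `A = ad X` for `X ∈ 𝔤₁`. Since `A` raises degree by one, it maps `𝔤` into `𝒱₀`, so
`π₀ ∘ A = A`, and it is nilpotent, so `tr A = 0`. Because `ℓ` vanishes on `𝔤₁` and `π₀` is the
projection onto `𝒱₀` along `𝔤₁`, we have `ℓ ∘ π₀ = ℓ`, hence `π_ℓ = π₀ + ℓ`, with
`π₀ ∘ ℓ = 0` and `ℓ ∘ ℓ = 0`. Expanding `tr((π₀ + ℓ) A (π₀ + ℓ))` and cycling the factors of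
each of the four terms leaves only `tr(ℓ ∘ A)`.
-/

namespace LinearMap

variable {R M : Type*} [CommRing R] [AddCommGroup M] [Module R M]
  [Module.Free R M] [Module.Finite R M]

theorem trace_add_comp_comp_add {p ℓ A : M →ₗ[R] M} (hpA : p ∘ₗ A = A)
    (hA : trace R M A = 0) (hpℓ : p ∘ₗ ℓ = 0) (hℓℓ : ℓ ∘ₗ ℓ = 0) :
    trace R M ((p + ℓ) ∘ₗ A ∘ₗ (p + ℓ)) = trace R M (ℓ ∘ₗ A) := by
  have hpAp : trace R M (p ∘ₗ A ∘ₗ p) = 0 := by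
    rw [← comp_assoc, hpA, trace_comp_comm', hpA, hA]
  have hpAℓ : trace R M (p ∘ₗ A ∘ₗ ℓ) = trace R M (ℓ ∘ₗ A) := by
    rw [← comp_assoc, hpA, trace_comp_comm']
  have hℓAp : trace R M (ℓ ∘ₗ A ∘ₗ p) = 0 := by
    rw [trace_comp_comm', comp_assoc, hpℓ, comp_zero, map_zero]
  have hℓAℓ : trace R M (ℓ ∘ₗ A ∘ₗ ℓ) = 0 := by
    rw [trace_comp_comm', comp_assoc, hℓℓ, comp_zero, map_zero]
  simp only [comp_add, add_comp, map_add, hpAp, hpAℓ, hℓAp, hℓAℓ, zero_add, add_zero]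

end LinearMap

namespace Submodule

variable {R M : Type*} [Semiring R] [AddCommMonoid M] [Module R M]
  {G : ℕ → Submodule R M} {f : M →ₗ[R] M}

theorem sup_iSup_Ici_two_eq_top (htop : ⨆ j, G j = ⊤) (hG0 : G 0 = ⊥) :
    G 1 ⊔ ⨆ j ∈ Set.Ici 2, G j = ⊤ := by
  refine eq_top_iff.mpr (htop ▸ iSup_le fun j => ?_)
  match j with
  | 0 => exact hG0 ▸ bot_le
  | 1 => exact le_sup_left
  | k + 2 => exact le_sup_of_le_right (le_biSup G (Set.mem_Ici.mpr (by omega)))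

theorem range_le_iSup_Ici_two_of_mapsTo_succ (htop : ⨆ j, G j = ⊤) (hG0 : G 0 = ⊥)
    (hf : ∀ j, ∀ y ∈ G j, f y ∈ G (j + 1)) :
    LinearMap.range f ≤ ⨆ j ∈ Set.Ici 2, G j := by
  rw [LinearMap.range_eq_map, ← htop, map_iSup]
  refine iSup_le fun j => map_le_iff_le_comap.mpr fun y hy => ?_
  match j with
  | 0 =>
    rw [hG0, mem_bot] at hy
    rw [mem_comap, hy, map_zero]
    exact zero_mem _
  | k + 1 => exact le_biSup G (Set.mem_Ici.mpr (by omega)) (hf _ y hy)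

theorem pow_apply_mem_of_mapsTo_succ (hf : ∀ j, ∀ y ∈ G j, f y ∈ G (j + 1))
    (n : ℕ) {j : ℕ} {y : M} (hy : y ∈ G j) : (f ^ n) y ∈ G (j + n) := by
  induction n with
  | zero => exact hy
  | succ n ih => rw [pow_succ', Module.End.mul_apply]; exact hf _ _ ih

theorem isNilpotent_of_mapsTo_succ (htop : ⨆ j, G j = ⊤) {m : ℕ}
    (hGtop : ∀ j, m < j → G j = ⊥) (hf : ∀ j, ∀ y ∈ G j, f y ∈ G (j + 1)) :
    IsNilpotent f := by
  refine ⟨m + 1, LinearMap.ker_eq_top.mp (eq_top_iff.mpr (htop ▸ iSup_le fun j y hy => ?_))⟩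
  have h := pow_apply_mem_of_mapsTo_succ hf (m + 1) hy
  rwa [hGtop _ (by omega), mem_bot] at h

end Submodule

open Submodule LinearMap in
theorem trace_graph_projection_eq_trace_ell_general
    (L : Type*) [LieRing L] [LieAlgebra ℝ L] [FiniteDimensional ℝ L]
    (m : ℕ) (G : ℕ → Submodule ℝ L)
    (hG0 : G 0 = ⊥) (hGtop : ∀ j, m < j → G j = ⊥)
    (hinternal : DirectSum.IsInternal G)
    (hstrat : ∀ x ∈ G 1, ∀ (j : ℕ), ∀ y ∈ G j, ⁅x, y⁆ ∈ G (j + 1))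
    (V₀ : Submodule ℝ L) (hV₀ : V₀ = ⨆ j ∈ Set.Ici 2, G j)
    (π₀ : L →ₗ[ℝ] L)
    (hπ1 : ∀ v ∈ V₀, π₀ v = v) (hπ2 : ∀ v ∈ G 1, π₀ v = 0)
    (ℓ : L →ₗ[ℝ] L) (hℓ1 : ∀ v, ℓ v ∈ G 1) (hℓ2 : ∀ v ∈ G 1, ℓ v = 0)
    (πℓ : L →ₗ[ℝ] L) (hπℓ : πℓ = π₀ + ℓ ∘ₗ π₀) :
    (∀ X ∈ G 1,
        LinearMap.trace ℝ L (πℓ ∘ₗ (LieAlgebra.ad ℝ L X : L →ₗ[ℝ] L) ∘ₗ πℓ)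
          = LinearMap.trace ℝ L (ℓ ∘ₗ (LieAlgebra.ad ℝ L X : L →ₗ[ℝ] L))) ∧
    ((∀ X ∈ G 1,
        LinearMap.trace ℝ L (πℓ ∘ₗ (LieAlgebra.ad ℝ L X : L →ₗ[ℝ] L) ∘ₗ πℓ) = 0)
      ↔ (∀ X ∈ G 1,
        LinearMap.trace ℝ L (ℓ ∘ₗ (LieAlgebra.ad ℝ L X : L →ₗ[ℝ] L)) = 0)) := by
  have htop := hinternal.submodule_iSup_eq_top
  have hℓπ : ℓ ∘ₗ π₀ = ℓ :=
    ext_on_codisjoint (codisjoint_iff.mpr (hV₀ ▸ sup_iSup_Ici_two_eq_top htop hG0))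
      (fun v hv => by simp [hπ2 v hv, hℓ2 v hv]) (fun v hv => by simp [hπ1 v hv])
  have key : ∀ X ∈ G 1, trace ℝ L (πℓ ∘ₗ (LieAlgebra.ad ℝ L X : L →ₗ[ℝ] L) ∘ₗ πℓ)
      = trace ℝ L (ℓ ∘ₗ (LieAlgebra.ad ℝ L X : L →ₗ[ℝ] L)) := by
    intro X hX
    have hraise : ∀ j, ∀ y ∈ G j, (LieAlgebra.ad ℝ L X : L →ₗ[ℝ] L) y ∈ G (j + 1) :=
      hstrat X hX
    have hrange := hV₀ ▸ range_le_iSup_Ici_two_of_mapsTo_succ htop hG0 hraise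
    rw [hπℓ, hℓπ]
    exact trace_add_comp_comp_add (ext fun v => hπ1 _ (hrange (mem_range_self _ v)))
      (isNilpotent_trace_of_isNilpotent (isNilpotent_of_mapsTo_succ htop hGtop hraise)).eq_zero
      (ext fun v => hπ2 _ (hℓ1 v)) (ext fun v => hℓ2 _ (hℓ1 v))
  exact ⟨key, forall₂_congr fun X hX => by rw [key X hX]⟩

/-- Let `𝔤 = 𝔤₁ ⊕ 𝒱₀` be a stratified nilpotent Lie algebra
with `𝒱₀ = 𝔤₂ ⊕ … ⊕ 𝔤_m`, and let `𝒱_ℓ = {X + ℓ(X) : X ∈ 𝒱₀}` for a linear map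
`ℓ : 𝒱₀ → 𝔤₁` (extended by `0` on `𝔤₁`), with associated projection
`π_ℓ = π₀ + ℓ ∘ π₀ : 𝔤 → 𝒱_ℓ` along `𝔤₁`.  Then
`tr(π_ℓ ∘ ad_X ∘ π_ℓ) = tr(ℓ ∘ ad_X)` for every `X ∈ 𝔤₁`; consequently `𝒱_ℓ`
satisfies the compatibility condition `tr(π_ℓ ∘ ad_X ∘ π_ℓ) = 0` for all
`X ∈ 𝔤₁` if and only if `tr(ℓ ∘ ad_X) = 0` for all `X ∈ 𝔤₁`. -/
theorem trace_graph_projection_eq_trace_ell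
    (L : Type*) [LieRing L] [LieAlgebra ℝ L] [FiniteDimensional ℝ L]
    (m : ℕ) (G : ℕ → Submodule ℝ L)
    (hG0 : G 0 = ⊥) (hGtop : ∀ j, m < j → G j = ⊥)
    (hinternal : DirectSum.IsInternal G)
    (hstrat : ∀ x ∈ G 1, ∀ (j : ℕ), ∀ y ∈ G j, ⁅x, y⁆ ∈ G (j + 1))
    (hspan : ∀ j, 1 ≤ j →
      G (j + 1) = Submodule.span ℝ {z : L | ∃ x ∈ G 1, ∃ y ∈ G j, z = ⁅x, y⁆})
    (V₀ : Submodule ℝ L) (hV₀ : V₀ = ⨆ j ∈ Set.Ici 2, G j)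
    (π₀ : L →ₗ[ℝ] L)
    (hπ1 : ∀ v ∈ V₀, π₀ v = v) (hπ2 : ∀ v ∈ G 1, π₀ v = 0)
    (ℓ : L →ₗ[ℝ] L) (hℓ1 : ∀ v, ℓ v ∈ G 1) (hℓ2 : ∀ v ∈ G 1, ℓ v = 0)
    (πℓ : L →ₗ[ℝ] L) (hπℓ : πℓ = π₀ + ℓ ∘ₗ π₀) :
    (∀ X ∈ G 1,
        LinearMap.trace ℝ L (πℓ ∘ₗ (LieAlgebra.ad ℝ L X : L →ₗ[ℝ] L) ∘ₗ πℓ)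
          = LinearMap.trace ℝ L (ℓ ∘ₗ (LieAlgebra.ad ℝ L X : L →ₗ[ℝ] L))) ∧
    ((∀ X ∈ G 1,
        LinearMap.trace ℝ L (πℓ ∘ₗ (LieAlgebra.ad ℝ L X : L →ₗ[ℝ] L) ∘ₗ πℓ) = 0)
      ↔ (∀ X ∈ G 1,
        LinearMap.trace ℝ L (ℓ ∘ₗ (LieAlgebra.ad ℝ L X : L →ₗ[ℝ] L)) = 0)) :=
  trace_graph_projection_eq_trace_ell_general L m G hG0 hGtop hinternal hstrat V₀ hV₀ π₀ hπ1 hπ2 ℓ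
    hℓ1 hℓ2 πℓ hπℓ
end
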